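/- For every positive integer n, every real-valued Walsh polynomial g of order less than 2^n (i.e. g = ∑_{k=0}^{2^n-1} a_k w_k), every f ∈ L^p(G) with 1 ≤ p < ∞, the function x ↦ ∫_G r_n(t) g(t) (f(x+t) − f(x)) dμ(t) has L^p norm at most (1/2) ‖g‖₁ · ω_p(f, 2^{-n}), where ω_p(f, δ) := sup_{|t| < δ} ‖f(·+t) − f(·)‖_p and |t| := ∑_{i=0}^∞ t_i 2^{-(i+1)}. -/

import Mathlib

open MeasureTheory Finset
open scoped ENNReal NNReal

noncomputable section

abbrev G : Type := ℕ → ZMod 2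

instance : TopologicalSpace (ZMod 2) := ⊥
instance : DiscreteTopology (ZMod 2) := ⟨rfl⟩
instance : IsTopologicalAddGroup (ZMod 2) :=
  { continuous_add := continuous_of_discreteTopology
    continuous_neg := continuous_of_discreteTopology }
instance : MeasurableSpace (ZMod 2) := ⊤
instance : BorelSpace (ZMod 2) := ⟨(borel_eq_top_of_discrete).symm⟩

/-- The normalized Haar measure on the Walsh group. -/
def μ : Measure G := Measure.addHaarMeasure ⊤

/-- Rademacher function. -/
def rad (k : ℕ) (x : G) : ℝ := if x k = 0 then 1 else -1

/-- Walsh–Paley function. -/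
def walsh (n : ℕ) (x : G) : ℝ :=
  ∏ k ∈ Finset.range (n + 1), if n.testBit k then rad k x else 1

/-- Walsh–Dirichlet kernel. -/
def D (m : ℕ) (x : G) : ℝ := ∑ k ∈ Finset.range m, walsh k x

/-- Walsh–Fejér kernel. -/
def Fejer (m : ℕ) (x : G) : ℝ := (1 / m : ℝ) * ∑ k ∈ Finset.range m, D (k + 1) x

/-- Dyadic interval `I_n`. -/
def I (n : ℕ) : Set G := {y | ∀ i < n, y i = 0}

/-- The dyadic "absolute value" on the Walsh group. -/
def absG (t : G) : ℝ := ∑' i, ((t i).val : ℝ) / 2 ^ (i + 1)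

/-- The `L^p` modulus of continuity. -/
def omegaMod (p : ℝ≥0∞) (f : G → ℝ) (δ : ℝ) : ℝ≥0∞ :=
  ⨆ t ∈ {t : G | absG t < δ}, eLpNorm (fun x => f (x + t) - f x) p μ

/-- Walsh–Fourier coefficient. -/
def wCoeff (f : G → ℝ) (k : ℕ) : ℝ := ∫ x, f x * walsh k x ∂μ

/-- Partial sum of the Walsh–Fourier series. -/
def S (m : ℕ) (f : G → ℝ) (x : G) : ℝ :=
  ∑ k ∈ Finset.range m, wCoeff f k * walsh k x

/-!
Let `e` be the point with a single `1` in coordinate `n`. Translation by `e` flips the sign of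
`r_n` and fixes every Walsh function of index `< 2^n`, so the kernel `k = r_n g` satisfies
`k (t + e) = -k t`. Averaging the integral with its translate by `e` turns
`∫ k(t) (f(x+t) - f(x)) dt` into `½ ∫ k(t) (f(x+t) - f(x+t+e)) dt`, whose `L^p` norm is at most
`½ ‖k‖₁ ‖f(· + e) - f‖_p` by Minkowski's integral inequality; finally `‖k‖₁ = ‖g‖₁` and
`|e| = 2^{-n-1} < 2^{-n}`. Minkowski's inequality is derived from the weighted Jensen
inequality `(∫ c F)^P ≤ (∫ c)^{P-1} ∫ c F^P` and Tonelli.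
-/

theorem ENNReal.lintegral_mul_rpow_le {α : Type*} [MeasurableSpace α] {ν : Measure α}
    {c F : α → ℝ≥0∞} (hc : AEMeasurable c ν) (hF : AEMeasurable F ν) {P : ℝ} (hP : 1 ≤ P) :
    (∫⁻ t, c t * F t ∂ν) ^ P ≤ (∫⁻ t, c t ∂ν) ^ (P - 1) * ∫⁻ t, c t * F t ^ P ∂ν := by
  have hP0 : 0 < P := zero_lt_one.trans_le hP
  -- Hölder with exponents `1/P` and `1 - 1/P`, applied to `c F = (c F^P)^(1/P) c^(1 - 1/P)`
  have holder := ENNReal.lintegral_mul_norm_pow_le (f := fun t => c t * F t ^ P)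
    (hc.mul (hF.pow_const P)) hc
    (inv_nonneg.2 hP0.le) (sub_nonneg.2 (inv_le_one_of_one_le₀ hP)) (add_sub_cancel P⁻¹ 1)
  have hsplit : ∀ t, (c t * F t ^ P) ^ P⁻¹ * c t ^ (1 - P⁻¹) = c t * F t := fun t => by
    rw [ENNReal.mul_rpow_of_nonneg _ _ (inv_nonneg.2 hP0.le), ← ENNReal.rpow_mul,
      mul_inv_cancel₀ hP0.ne', ENNReal.rpow_one, mul_right_comm,
      ← ENNReal.rpow_add_of_nonneg _ _ (inv_nonneg.2 hP0.le)
        (sub_nonneg.2 (inv_le_one_of_one_le₀ hP)), add_sub_cancel, ENNReal.rpow_one]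
  simp only [hsplit] at holder
  calc (∫⁻ t, c t * F t ∂ν) ^ P
      ≤ ((∫⁻ t, c t * F t ^ P ∂ν) ^ P⁻¹ * (∫⁻ t, c t ∂ν) ^ (1 - P⁻¹)) ^ P := by gcongr
    _ = (∫⁻ t, c t ∂ν) ^ (P - 1) * ∫⁻ t, c t * F t ^ P ∂ν := by
      rw [ENNReal.mul_rpow_of_nonneg _ _ hP0.le, ← ENNReal.rpow_mul, ← ENNReal.rpow_mul,
        inv_mul_cancel₀ hP0.ne', ENNReal.rpow_one, sub_mul, one_mul, inv_mul_cancel₀ hP0.ne',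
        mul_comm]

theorem integral_mul_eq_half_integral_mul_sub_add {Γ : Type*} [AddGroup Γ] [MeasurableSpace Γ]
    [MeasurableAdd Γ] {ν : Measure Γ} [ν.IsAddRightInvariant] {k F : Γ → ℝ} {e : Γ}
    (hk : ∀ t, k (t + e) = -k t) (hkF : Integrable (fun t => k t * F t) ν) :
    ∫ t, k t * F t ∂ν = 2⁻¹ * ∫ t, k t * (F t - F (t + e)) ∂ν := by
  have hshift : ∫ t, k t * F (t + e) ∂ν = -∫ t, k t * F t ∂ν := by
    rw [← integral_add_right_eq_self (fun t => k t * F t) e]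
    simp only [hk, neg_mul, integral_neg, neg_neg]
  have hint : Integrable (fun t => k t * F (t + e)) ν := by
    refine (hkF.comp_add_right e).neg.congr (ae_of_all _ fun t => ?_)
    simp [hk]
  simp_rw [mul_sub]
  rw [integral_sub hkF hint, hshift]
  ring

section Translation

variable {Γ : Type*} [AddGroup Γ] [MeasurableSpace Γ] [MeasurableAdd₂ Γ] {ν : Measure Γ}
  [ν.IsAddLeftInvariant] [ν.IsAddRightInvariant] {p : ℝ≥0∞}

theorem eLpNorm_lintegral_mul_add_le [SFinite ν] (hp1 : 1 ≤ p) (hp : p ≠ ∞) {c F : Γ → ℝ≥0∞}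
    (hc : AEMeasurable c ν) (hF : AEMeasurable F ν) :
    eLpNorm (fun x => ∫⁻ t, c t * F (x + t) ∂ν) p ν ≤ (∫⁻ t, c t ∂ν) * eLpNorm F p ν := by
  have hp0 : p ≠ 0 := (zero_lt_one.trans_le hp1).ne'
  set P := p.toReal
  have hP : 1 ≤ P := by simpa using ENNReal.toReal_mono hp hp1
  have hP0 : 0 < P := zero_lt_one.trans_le hP
  rw [eLpNorm_eq_lintegral_rpow_enorm_toReal hp0 hp, eLpNorm_eq_lintegral_rpow_enorm_toReal hp0 hp]
  simp only [enorm_eq_self]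
  set C := ∫⁻ t, c t ∂ν
  set W := ∫⁻ y, F y ^ P ∂ν
  have hprod : AEMeasurable (fun z : Γ × Γ => c z.2 * F (z.1 + z.2) ^ P) (ν.prod ν) :=
    hc.comp_snd.mul
      ((hF.comp_quasiMeasurePreserving (quasiMeasurePreserving_add ν ν)).pow_const P)
  have hinner : ∀ t, ∫⁻ x, c t * F (x + t) ^ P ∂ν = c t * W := fun t => by
    rw [lintegral_const_mul'' (f := fun x => F (x + t) ^ P) _ ((hF.comp_quasiMeasurePreserving
      (measurePreserving_add_right ν t).quasiMeasurePreserving).pow_const P),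
      lintegral_add_right_eq_self (fun y => F y ^ P) t]
  have hswap : ∫⁻ x, ∫⁻ t, c t * F (x + t) ^ P ∂ν ∂ν = C * W := by
    rw [lintegral_lintegral_swap hprod, lintegral_congr hinner, lintegral_mul_const'' _ hc]
  calc (∫⁻ x, (∫⁻ t, c t * F (x + t) ∂ν) ^ P ∂ν) ^ (1 / P)
      ≤ (∫⁻ x, C ^ (P - 1) * ∫⁻ t, c t * F (x + t) ^ P ∂ν ∂ν) ^ (1 / P) := by
        gcongr with x
        exact ENNReal.lintegral_mul_rpow_le hc (hF.comp_quasiMeasurePreserving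
          (measurePreserving_add_left ν x).quasiMeasurePreserving) hP
    _ = (C ^ P * W) ^ (1 / P) := by
        rw [lintegral_const_mul'' _ hprod.lintegral_prod_right', hswap, ← mul_assoc]
        nth_rw 2 [← ENNReal.rpow_one C]
        rw [← ENNReal.rpow_add_of_nonneg _ _ (sub_nonneg.2 hP) zero_le_one, sub_add_cancel]
    _ = C * W ^ (1 / P) := by
        rw [ENNReal.mul_rpow_of_nonneg _ _ (by positivity), ← ENNReal.rpow_mul,
          mul_one_div_cancel hP0.ne', ENNReal.rpow_one]

theorem eLpNorm_integral_mul_add_le [SFinite ν] (hp1 : 1 ≤ p) (hp : p ≠ ∞) {k F : Γ → ℝ}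
    (hk : AEStronglyMeasurable k ν) (hF : AEStronglyMeasurable F ν) :
    eLpNorm (fun x => ∫ t, k t * F (x + t) ∂ν) p ν ≤ eLpNorm k 1 ν * eLpNorm F p ν := by
  calc eLpNorm (fun x => ∫ t, k t * F (x + t) ∂ν) p ν
      ≤ eLpNorm (fun x => ∫⁻ t, ‖k t‖ₑ * ‖F (x + t)‖ₑ ∂ν) p ν :=
        eLpNorm_mono_enorm fun x => by
          simpa only [enorm_mul, enorm_eq_self] using
            enorm_integral_le_lintegral_enorm (μ := ν) fun t => k t * F (x + t)
    _ ≤ eLpNorm k 1 ν * eLpNorm F p ν :=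
        (eLpNorm_lintegral_mul_add_le hp1 hp hk.enorm hF.enorm).trans_eq <| by
          rw [eLpNorm_one_eq_lintegral_enorm, eLpNorm_enorm]

theorem eLpNorm_integral_mul_sub_le_of_add_eq_neg [IsFiniteMeasure ν] (hp1 : 1 ≤ p)
    (hp : p ≠ ∞) {k f : Γ → ℝ} {e : Γ} {C : ℝ} (hk : AEStronglyMeasurable k ν)
    (hk_bdd : ∀ᵐ t ∂ν, ‖k t‖ ≤ C) (hk_anti : ∀ t, k (t + e) = -k t) (hf : MemLp f p ν) :
    eLpNorm (fun x => ∫ t, k t * (f (x + t) - f x) ∂ν) p ν ≤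
      2⁻¹ * (eLpNorm k 1 ν * eLpNorm (fun y => f (y + e) - f y) p ν) := by
  have hsymm : ∀ x, ∫ t, k t * (f (x + t) - f x) ∂ν =
      2⁻¹ * ∫ t, k t * (f (x + t) - f (x + t + e)) ∂ν := fun x => by
    have hint := (((hf.integrable hp1).comp_add_left x).sub (integrable_const (f x))).bdd_mul
      hk hk_bdd
    simpa only [sub_sub_sub_cancel_right, add_assoc] using
      integral_mul_eq_half_integral_mul_sub_add (F := fun t => f (x + t) - f x) hk_anti hint
  have hf_shift : AEStronglyMeasurable (fun y => f y - f (y + e)) ν :=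
    hf.1.sub (hf.1.comp_measurePreserving (measurePreserving_add_right ν e))
  calc eLpNorm (fun x => ∫ t, k t * (f (x + t) - f x) ∂ν) p ν
      = eLpNorm ((2⁻¹ : ℝ) • fun x => ∫ t, k t * (f (x + t) - f (x + t + e)) ∂ν) p ν := by
        simp only [hsymm]
        rfl
    _ = ‖(2⁻¹ : ℝ)‖ₑ * eLpNorm (fun x => ∫ t, k t * (f (x + t) - f (x + t + e)) ∂ν) p ν :=
        eLpNorm_const_smul _ _ _ _
    _ ≤ ‖(2⁻¹ : ℝ)‖ₑ * (eLpNorm k 1 ν * eLpNorm (fun y => f y - f (y + e)) p ν) := by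
        gcongr
        exact eLpNorm_integral_mul_add_le (F := fun y => f y - f (y + e)) hp1 hp hk hf_shift
    _ = ‖(2⁻¹ : ℝ)‖ₑ * (eLpNorm k 1 ν * eLpNorm (fun y => f (y + e) - f y) p ν) := by
        congr 2
        exact eLpNorm_sub_comm _ _ _ _
    _ = 2⁻¹ * (eLpNorm k 1 ν * eLpNorm (fun y => f (y + e) - f y) p ν) := by
        rw [← ofReal_norm, Real.norm_eq_abs, abs_inv, abs_two,
          ENNReal.ofReal_inv_of_pos two_pos, ENNReal.ofReal_ofNat]

end Translation

instance : IsProbabilityMeasure μ :=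
  ⟨by rw [μ, ← TopologicalSpace.PositiveCompacts.coe_top (α := G)]
      exact Measure.addHaarMeasure_self⟩

instance : μ.IsAddLeftInvariant := by
  rw [μ]
  infer_instance

theorem measurable_rad (k : ℕ) : Measurable (rad k) :=
  (measurable_from_top (f := fun v : ZMod 2 => if v = 0 then (1 : ℝ) else -1)).comp
    (measurable_pi_apply k)

theorem measurable_walsh (k : ℕ) : Measurable (walsh k) :=
  Finset.measurable_prod _ fun j _ => by
    by_cases h : k.testBit j <;> simp [h, measurable_rad]

theorem abs_rad (k : ℕ) (x : G) : |rad k x| = 1 := by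
  unfold rad; split <;> norm_num

theorem enorm_rad (k : ℕ) (x : G) : ‖rad k x‖ₑ = 1 := by
  rw [← ofReal_norm, Real.norm_eq_abs, abs_rad, ENNReal.ofReal_one]

theorem eLpNorm_rad_mul (n : ℕ) (g : G → ℝ) (p : ℝ≥0∞) :
    eLpNorm (fun t => rad n t * g t) p μ = eLpNorm g p μ :=
  eLpNorm_congr_enorm_ae <| ae_of_all _ fun t => by rw [enorm_mul, enorm_rad, one_mul]

theorem abs_walsh_le (k : ℕ) (x : G) : |walsh k x| ≤ 1 := by
  rw [walsh, Finset.abs_prod]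
  refine Finset.prod_le_one (fun j _ => abs_nonneg _) fun j _ => ?_
  by_cases h : k.testBit j <;> simp [h, abs_rad]

theorem rad_add_single_self (n : ℕ) (t : G) : rad n (t + Pi.single n 1) = -rad n t := by
  have : ∀ v : ZMod 2, v + 1 = 0 ↔ ¬v = 0 := by decide
  simp only [rad, Pi.add_apply, Pi.single_eq_same, this]
  split_ifs <;> norm_num

theorem rad_add_single_of_ne {j n : ℕ} (hj : j ≠ n) (t : G) :
    rad j (t + Pi.single n 1) = rad j t := by
  simp [rad, Pi.single_eq_of_ne hj]

theorem walsh_add_single_of_lt {k n : ℕ} (hk : k < 2 ^ n) (t : G) :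
    walsh k (t + Pi.single n 1) = walsh k t := by
  refine Finset.prod_congr rfl fun j _ => ?_
  by_cases hb : k.testBit j
  · have hj : j ≠ n := by
      rintro rfl
      simp [Nat.testBit_eq_false_of_lt hk] at hb
    simp [hb, rad_add_single_of_ne hj]
  · simp [hb]

theorem absG_single (n : ℕ) : absG (Pi.single n 1) = 1 / 2 ^ (n + 1) := by
  refine (tsum_congr fun i => ?_).trans (tsum_ite_eq n fun _ => (1 : ℝ) / 2 ^ (n + 1))
  by_cases h : i = n
  · subst h; simp [ZMod.val_one]
  · simp [h]

theorem absG_single_lt (n : ℕ) : absG (Pi.single n 1) < (2 : ℝ) ^ (-(n : ℤ)) := by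
  rw [absG_single, zpow_neg, zpow_natCast, one_div, inv_lt_inv₀ (by positivity) (by positivity)]
  exact pow_lt_pow_right₀ one_lt_two n.lt_succ_self

section WalshPolynomial

variable (a : ℕ → ℝ) (m : ℕ)

theorem measurable_sum_mul_walsh :
    Measurable fun t => ∑ k ∈ range m, a k * walsh k t :=
  Finset.measurable_sum _ fun k _ => (measurable_walsh k).const_mul (a k)

theorem abs_sum_mul_walsh_le (t : G) :
    |∑ k ∈ range m, a k * walsh k t| ≤ ∑ k ∈ range m, |a k| :=
  (Finset.abs_sum_le_sum_abs _ _).trans <| Finset.sum_le_sum fun k _ => by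
    rw [abs_mul]
    exact mul_le_of_le_one_right (abs_nonneg _) (abs_walsh_le k t)

theorem sum_mul_walsh_add_single (n : ℕ) (t : G) :
    ∑ k ∈ range (2 ^ n), a k * walsh k (t + Pi.single n 1) =
      ∑ k ∈ range (2 ^ n), a k * walsh k t :=
  Finset.sum_congr rfl fun k hk => by rw [walsh_add_single_of_lt (Finset.mem_range.mp hk)]

end WalshPolynomial

theorem ms_modulus_estimate_general (n : ℕ) (a : ℕ → ℝ)
    (g : G → ℝ) (hg : g = fun t => ∑ k ∈ Finset.range (2 ^ n), a k * walsh k t)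
    (p : ℝ) (hp : 1 ≤ p) (f : G → ℝ) (hf : MemLp f (ENNReal.ofReal p) μ) :
    eLpNorm (fun x => ∫ t, rad n t * g t * (f (x + t) - f x) ∂μ)
        (ENNReal.ofReal p) μ ≤
      eLpNorm g 1 μ * omegaMod (ENNReal.ofReal p) f ((2 : ℝ) ^ (-(n : ℤ))) / 2 := by
  have hk_anti : ∀ t, rad n (t + Pi.single n 1) * g (t + Pi.single n 1) = -(rad n t * g t) :=
    fun t => by
      rw [rad_add_single_self, hg]
      simp only [sum_mul_walsh_add_single, neg_mul]
  have hk_bdd : ∀ t, ‖rad n t * g t‖ ≤ ∑ k ∈ range (2 ^ n), |a k| := fun t => by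
    rw [norm_mul, Real.norm_eq_abs, Real.norm_eq_abs, abs_rad, one_mul, hg]
    exact abs_sum_mul_walsh_le a _ t
  have hk_meas : Measurable fun t => rad n t * g t :=
    (measurable_rad n).mul (hg ▸ measurable_sum_mul_walsh a _)
  calc _ ≤ 2⁻¹ * (eLpNorm (fun t => rad n t * g t) 1 μ *
          eLpNorm (fun y => f (y + Pi.single n 1) - f y) (ENNReal.ofReal p) μ) :=
        eLpNorm_integral_mul_sub_le_of_add_eq_neg (k := fun t => rad n t * g t)
          (e := Pi.single n 1) (by simpa using hp) ENNReal.ofReal_ne_top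
          hk_meas.aestronglyMeasurable (ae_of_all _ hk_bdd) hk_anti hf
    _ ≤ _ := by
        rw [eLpNorm_rad_mul, ENNReal.div_eq_inv_mul]
        gcongr
        exact le_biSup (fun t => eLpNorm (fun x => f (x + t) - f x) _ μ) (absG_single_lt n)

/-- Móricz–Siddiqi modulus estimate. -/
theorem ms_modulus_estimate (n : ℕ) (hn : 0 < n) (a : ℕ → ℝ)
    (g : G → ℝ) (hg : g = fun t => ∑ k ∈ Finset.range (2 ^ n), a k * walsh k t)
    (p : ℝ) (hp : 1 ≤ p) (f : G → ℝ) (hf : MemLp f (ENNReal.ofReal p) μ) :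
    eLpNorm (fun x => ∫ t, rad n t * g t * (f (x + t) - f x) ∂μ)
        (ENNReal.ofReal p) μ ≤
      eLpNorm g 1 μ * omegaMod (ENNReal.ofReal p) f ((2 : ℝ) ^ (-(n : ℤ))) / 2 :=
  ms_modulus_estimate_general n a g hg p hp f hf
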